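/- arXiv:q-alg/9506022 — 2 statements merged into one kernel-verified Lean document; each statement's English description precedes it below -/
import Mathlib

section
/- In U_q(sl_2), the comultiplication of the q^{-2}-exponential of the lowering generator factorizes as Δ(exp_{q^{-2}}(s·f)) = exp_{q^{-2}}(s·(1⊗f)) · exp_{q^{-2}}(s·(f⊗k)). -/
open TensorProduct

/-- The `q`-integer `(n)_q = 1 + q + ⋯ + q^(n-1)`. -/
def qInt {K : Type*} [Field K] (q : K) (n : ℕ) : K := ∑ i ∈ Finset.range n, q ^ i

/-- The `q`-factorial `(n)_q! = (1)_q (2)_q ⋯ (n)_q`. -/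
def qFact {K : Type*} [Field K] (q : K) (n : ℕ) : K := ∏ j ∈ Finset.range n, qInt q (j + 1)

/-- The `q`-exponential `exp_q(t x) = Σ_{n≥0} t^n x^n/(n)_q!` as a formal power series
in `t` with coefficients in `A`. -/
noncomputable def qExp {K : Type*} [Field K] {A : Type*} [Ring A] [Algebra K A]
    (q : K) (x : A) : PowerSeries A :=
  PowerSeries.mk fun n => (qFact q n)⁻¹ • x ^ n

lemma qFact_zero {K : Type*} [Field K] (c : K) : qFact c 0 = 1 := by
  simp [qFact]

lemma qFact_succ {K : Type*} [Field K] (c : K) (n : ℕ) :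
    qFact c (n + 1) = qFact c n * qInt c (n + 1) := Finset.prod_range_succ _ _

lemma qInt_add {K : Type*} [Field K] (c : K) (i j : ℕ) :
    qInt c (i + j) = qInt c i + c ^ i * qInt c j := by
  simp only [qInt, Finset.sum_range_add, pow_add, Finset.mul_sum]

lemma qpow_comm {K : Type*} [Field K] {A : Type*} [Ring A] [Algebra K A]
    (c : K) (a b : A) (h : b * a = c • (a * b)) (j : ℕ) :
    b ^ j * a = c ^ j • (a * b ^ j) := by
  induction j with
  | zero => simp
  | succ j ih =>
    rw [pow_succ, mul_assoc, h, mul_smul_comm, ← mul_assoc, ih, smul_mul_assoc,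
      smul_smul, mul_assoc, ← pow_succ, ← pow_succ']

/-- The q-binomial coefficient in field form. -/
noncomputable def qBinom {K : Type*} [Field K] (c : K) (n i : ℕ) : K :=
  qFact c n / (qFact c i * qFact c (n - i))

lemma qBinom_pascal {K : Type*} [Field K] (c : K) (hc : ∀ n, qFact c n ≠ 0)
    (n i : ℕ) (hi : i < n) :
    qBinom c (n + 1) (i + 1) = qBinom c n i * c ^ (n - i) + qBinom c n (i + 1) := by
  have h1 : n - i = (n - (i+1)) + 1 := by omega
  have h2 : qInt c (n + 1) = qInt c (n - i) + c ^ (n - i) * qInt c (i + 1) := by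
    have : (n - i) + (i + 1) = n + 1 := by omega
    rw [← this, qInt_add]
  have e1 : qFact c (n + 1) = qFact c n * qInt c (n + 1) := qFact_succ c n
  have e2 : qFact c (i + 1) = qFact c i * qInt c (i + 1) := qFact_succ c i
  have e3 : qFact c (n - i) = qFact c (n - (i + 1)) * qInt c (n - i) := by
    rw [h1, qFact_succ, ← h1]
  have h3 : (n + 1) - (i + 1) = n - i := by omega
  have h4 : qInt c (i + 1) ≠ 0 := by
    intro h; exact hc (i + 1) (by rw [qFact_succ, h, mul_zero])
  have h5 : qInt c (n - i) ≠ 0 := by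
    intro h; exact hc (n - i) (by rw [h1, qFact_succ, ← h1, h, mul_zero])
  have h6 := hc i
  have h7 := hc (n - (i + 1))
  rw [qBinom, qBinom, qBinom, h3, e1, e2, e3, h2]
  field_simp
  ring

lemma qBinom_self {K : Type*} [Field K] (c : K) (hc : ∀ n, qFact c n ≠ 0) (n : ℕ) :
    qBinom c n n = 1 := by
  simp [qBinom, Nat.sub_self, qFact_zero, div_self (hc n)]

lemma qBinom_zero {K : Type*} [Field K] (c : K) (hc : ∀ n, qFact c n ≠ 0) (n : ℕ) :
    qBinom c n 0 = 1 := by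
  simp [qBinom, qFact_zero, div_self (hc n)]

theorem q_add_pow {K : Type*} [Field K] {A : Type*} [Ring A] [Algebra K A]
    (c : K) (hc : ∀ n, qFact c n ≠ 0) (a b : A) (h : b * a = c • (a * b)) (n : ℕ) :
    (a + b) ^ n = ∑ i ∈ Finset.range (n + 1),
      qBinom c n i • (a ^ i * b ^ (n - i)) := by
  induction n with
  | zero => simp [qBinom_zero c hc]
  | succ n ih =>
    rw [pow_succ, ih, Finset.sum_mul]
    have step : ∀ i ∈ Finset.range (n + 1),
        (qBinom c n i • (a ^ i * b ^ (n - i))) * (a + b)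
        = (qBinom c n i * c ^ (n - i)) • (a ^ (i + 1) * b ^ (n - i))
          + qBinom c n i • (a ^ i * b ^ (n - i + 1)) := by
      intro i _
      rw [mul_add, smul_mul_assoc, smul_mul_assoc, mul_assoc, qpow_comm c a b h,
        mul_smul_comm, smul_smul, ← mul_assoc, ← pow_succ,
        mul_assoc (a ^ i), ← pow_succ]
    rw [Finset.sum_congr rfl step, Finset.sum_add_distrib]
    -- target sum
    have hT : ∀ i, i ∈ Finset.range (n + 1) → n - i + 1 = n + 1 - i := by
      intro i hi; rw [Finset.mem_range] at hi; omega
    have key : ∑ i ∈ Finset.range (n + 1 + 1), qBinom c (n+1) i • (a ^ i * b ^ (n + 1 - i))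
        = (∑ i ∈ Finset.range (n + 1), (qBinom c n i * c ^ (n - i)) • (a ^ (i+1) * b ^ (n - i)))
          + ∑ i ∈ Finset.range (n + 1), qBinom c n i • (a ^ i * b ^ (n - i + 1)) := by
      rw [Finset.sum_range_succ' _ (n + 1)]
      rw [Finset.sum_range_succ' (fun i => qBinom c n i • (a ^ i * b ^ (n - i + 1))) n]
      rw [Finset.sum_range_succ (fun i => (qBinom c n i * c ^ (n - i)) • (a ^ (i+1) * b ^ (n - i)))]
      rw [Finset.sum_range_succ (fun i => qBinom c (n+1) (i+1) • (a ^ (i+1) * b ^ (n + 1 - (i+1))))]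
      have h0 : qBinom c (n+1) 0 • (a ^ 0 * b ^ (n + 1 - 0))
          = qBinom c n 0 • (a ^ 0 * b ^ (n - 0 + 1)) := by
        rw [qBinom_zero c hc, qBinom_zero c hc]
        norm_num
      have hlast : (qBinom c n n * c ^ (n - n)) • (a ^ (n+1) * b ^ (n - n))
          = qBinom c (n+1) (n+1) • (a ^ (n+1) * b ^ (n + 1 - (n+1))) := by
        rw [qBinom_self c hc, qBinom_self c hc]
        simp
      rw [h0, ← hlast]
      have hmid : ∀ i ∈ Finset.range n,
          qBinom c (n+1) (i+1) • (a ^ (i+1) * b ^ (n + 1 - (i+1)))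
          = (qBinom c n i * c ^ (n - i)) • (a ^ (i+1) * b ^ (n - i))
            + qBinom c n (i+1) • (a ^ (i+1) * b ^ (n - (i+1) + 1)) := by
        intro i hi
        rw [Finset.mem_range] at hi
        have e1 : n + 1 - (i + 1) = n - i := by omega
        have e2 : n - (i + 1) + 1 = n - i := by omega
        rw [e1, e2, qBinom_pascal c hc n i hi, add_smul]
      rw [Finset.sum_congr rfl hmid, Finset.sum_add_distrib]
      abel
    rw [key]

/-- In `U_q(sl_2)` (presented by generators `e, f, k^{±1}` with `ke = q²ek`,
`kf = q^{-2}fk`, `[e,f] = (k - k⁻¹)/(q - q⁻¹)` and comultiplication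
`Δ(e) = e⊗1 + k⁻¹⊗e`, `Δ(f) = 1⊗f + f⊗k`, `Δ(k) = k⊗k`), the `q^{-2}`-exponential of
the lowering generator factorizes under comultiplication:
`Δ(exp_{q^{-2}}(s f)) = exp_{q^{-2}}(s (1⊗f)) · exp_{q^{-2}}(s (f⊗k))`
as formal power series in `s` with coefficients in `U_q(sl_2) ⊗ U_q(sl_2)`. -/
theorem comul_qExp_f {K : Type*} [Field K] {A : Type*} [Ring A] [Algebra K A]
    (q : K) (hq : ∀ n : ℕ, qFact (q ^ (-2 : ℤ)) n ≠ 0)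
    (e f k kinv : A)
    (hk : k * kinv = 1) (hk' : kinv * k = 1)
    (hke : k * e = (q ^ 2) • (e * k))
    (hkf : k * f = (q ^ (-2 : ℤ)) • (f * k))
    (hef : e * f - f * e = (q - q⁻¹)⁻¹ • (k - kinv))
    (Δ : A →ₐ[K] A ⊗[K] A)
    (hΔe : Δ e = e ⊗ₜ[K] 1 + kinv ⊗ₜ[K] e)
    (hΔf : Δ f = 1 ⊗ₜ[K] f + f ⊗ₜ[K] k)
    (hΔk : Δ k = k ⊗ₜ[K] k) :
    PowerSeries.map Δ.toRingHom (qExp (q ^ (-2 : ℤ)) f) =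
      qExp (q ^ (-2 : ℤ)) ((1 : A) ⊗ₜ[K] f) * qExp (q ^ (-2 : ℤ)) (f ⊗ₜ[K] k) := by
  set c : K := q ^ (-2 : ℤ) with hcdef
  set a : A ⊗[K] A := (1 : A) ⊗ₜ[K] f
  set b : A ⊗[K] A := f ⊗ₜ[K] k
  have hcomm : b * a = c • (a * b) := by
    have : b * a = f ⊗ₜ[K] (k * f) := by
      simp [a, b, Algebra.TensorProduct.tmul_mul_tmul]
    rw [this, hkf]
    simp [a, b, Algebra.TensorProduct.tmul_mul_tmul, TensorProduct.tmul_smul]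
  ext n
  rw [PowerSeries.coeff_map, PowerSeries.coeff_mul, qExp, qExp, qExp,
    PowerSeries.coeff_mk, Finset.Nat.sum_antidiagonal_eq_sum_range_succ_mk]
  simp only [PowerSeries.coeff_mk]
  show Δ ((qFact c n)⁻¹ • f ^ n) = _
  rw [map_smul, map_pow, hΔf]
  have : (1 : A) ⊗ₜ[K] f + f ⊗ₜ[K] k = a + b := rfl
  rw [this, q_add_pow c hq a b hcomm n, Finset.smul_sum]
  refine Finset.sum_congr rfl fun i hi => ?_
  rw [Finset.mem_range] at hi
  rw [smul_mul_smul_comm, smul_smul, qBinom]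
  congr 1
  have h1 := hq n
  have h2 := hq i
  have h3 := hq (n - i)
  field_simp
end

section
/- The function τ(u,x) = a + bu + cx + dux with a, b, c, d generating Fun_q(SL_2) satisfies the q-Liouville equation: τ(u,x)·∂_x^{(q^{-2})}∂_u^{(q^{-2})}τ(q^{-1}u, qx) − ∂_x^{(q^{-2})}τ(u,x)·∂_u^{(q^{-2})}τ(q^{-1}u, qx) = 1. -/
section

variable {K : Type*} [Field K]

/-- The `q`-difference derivative on polynomials (in the variable `X`) with
coefficients in a possibly noncommutative ring `R`: it sends `X^n` to `(n)_q X^(n-1)`,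
equivalently `(∂_X^{(q)}F)(X) = (F(qX) − F(X))/((q−1)X)`. -/
noncomputable def qDerivP {R : Type*} [Semiring R] [Module K R] (q : K)
    (f : Polynomial R) : Polynomial R :=
  ∑ n ∈ Finset.range (f.natDegree + 1),
    Polynomial.monomial n ((∑ i ∈ Finset.range (n + 1), q ^ i) • f.coeff (n + 1))

/-- The substitution `X ↦ c·X` on polynomials. -/
noncomputable def scaleVar {R : Type*} [Semiring R] [Module K R] (c : K)
    (f : Polynomial R) : Polynomial R :=
  ∑ n ∈ Finset.range (f.natDegree + 1), Polynomial.monomial n (c ^ n • f.coeff n)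

/-- Apply an operation `g` to every coefficient of a polynomial; this is used to act on
the inner variable `u` of a polynomial in two central variables `u, x`. -/
noncomputable def mapCoeff {R : Type*} [Semiring R] (g : R → R)
    (f : Polynomial R) : Polynomial R :=
  ∑ n ∈ Finset.range (f.natDegree + 1), Polynomial.monomial n (g (f.coeff n))

lemma qDerivP_eq {R : Type*} [Semiring R] [Module K R] (q : K) (f : Polynomial R)
    (hf : f.natDegree ≤ 1) : qDerivP q f = Polynomial.C (f.coeff 1) := by
  have h2 : f.coeff 2 = 0 := f.coeff_eq_zero_of_natDegree_lt (by omega)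
  unfold qDerivP
  rw [Finset.sum_subset (Finset.range_subset_range.mpr (by omega : f.natDegree + 1 ≤ 2))]
  · simp [Finset.sum_range_succ, h2]
  · intro n _ hn'
    simp only [Finset.mem_range, not_lt] at hn'
    have : f.coeff (n + 1) = 0 := f.coeff_eq_zero_of_natDegree_lt (by omega)
    simp [this]

lemma scaleVar_eq {R : Type*} [Semiring R] [Module K R] (c : K) (f : Polynomial R)
    (hf : f.natDegree ≤ 1) :
    scaleVar c f = Polynomial.C (f.coeff 0) + Polynomial.C (c • f.coeff 1) * Polynomial.X := by
  unfold scaleVar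
  rw [Finset.sum_subset (Finset.range_subset_range.mpr (by omega : f.natDegree + 1 ≤ 2))]
  · rw [Finset.sum_range_succ, Finset.sum_range_one, Polynomial.C_mul_X_eq_monomial]
    simp
  · intro n _ hn'
    simp only [Finset.mem_range, not_lt] at hn'
    have : f.coeff n = 0 := f.coeff_eq_zero_of_natDegree_lt (by omega)
    simp [this]

lemma mapCoeff_eq {R : Type*} [Semiring R] (g : R → R) (hg : g 0 = 0) (f : Polynomial R)
    (hf : f.natDegree ≤ 1) :
    mapCoeff g f = Polynomial.C (g (f.coeff 0)) + Polynomial.C (g (f.coeff 1)) * Polynomial.X := by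
  unfold mapCoeff
  rw [Finset.sum_subset (Finset.range_subset_range.mpr (by omega : f.natDegree + 1 ≤ 2))]
  · rw [Finset.sum_range_succ, Finset.sum_range_one, Polynomial.C_mul_X_eq_monomial]
    simp
  · intro n _ hn'
    simp only [Finset.mem_range, not_lt] at hn'
    have : f.coeff n = 0 := f.coeff_eq_zero_of_natDegree_lt (by omega)
    simp [this, hg]

lemma lin_natDegree_le {R : Type*} [Semiring R] (p r : R) :
    (Polynomial.C p + Polynomial.C r * Polynomial.X).natDegree ≤ 1 := by
  compute_degree

lemma lin_coeff_zero {R : Type*} [Semiring R] (p r : R) :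
    (Polynomial.C p + Polynomial.C r * Polynomial.X).coeff 0 = p := by simp

lemma lin_coeff_one {R : Type*} [Semiring R] (p r : R) :
    (Polynomial.C p + Polynomial.C r * Polynomial.X).coeff 1 = r := by simp

lemma scaleVar_zero {R : Type*} [Semiring R] [Module K R] (c : K) :
    scaleVar c (0 : Polynomial R) = 0 := by
  unfold scaleVar; simp

lemma qDerivP_zero {R : Type*} [Semiring R] [Module K R] (q : K) :
    qDerivP q (0 : Polynomial R) = 0 := by
  unfold qDerivP; simp

/-- With `a, b, c, d` the generators of `Fun_q(SL_2)` and `u, x` central commuting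
variables, `τ(u,x) = a + bu + cx + dux` (an element of `A[u][x]`, inner variable `u`,
outer variable `x`) satisfies the `q`-Liouville equation:
`τ(u,x)·∂_x^{(q^{-2})}∂_u^{(q^{-2})}τ(q^{-1}u, qx)
  − ∂_x^{(q^{-2})}τ(u,x)·∂_u^{(q^{-2})}τ(q^{-1}u, qx) = 1`. -/
theorem qLiouville_equation {A : Type*} [Ring A] [Algebra K A]
    (q : K) (hq : q ≠ 0) (hroot : ∀ n : ℕ, q ^ (n + 1) ≠ 1)
    (a b c d : A)
    (hab : a * b = q⁻¹ • (b * a))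
    (hac : a * c = q⁻¹ • (c * a))
    (hbd : b * d = q⁻¹ • (d * b))
    (hcd : c * d = q⁻¹ • (d * c))
    (hbc : b * c = c * b)
    (hdet : a * d - q⁻¹ • (b * c) = 1)
    (hdet' : d * a - q • (b * c) = 1) :
    letI tau : Polynomial (Polynomial A) :=
      Polynomial.C (Polynomial.C a + Polynomial.C b * Polynomial.X) +
        Polynomial.C (Polynomial.C c + Polynomial.C d * Polynomial.X) * Polynomial.X
    -- `τ(q⁻¹u, qx)`: substitute `u ↦ q⁻¹u` and `x ↦ qx`
    letI sub : Polynomial (Polynomial A) → Polynomial (Polynomial A) :=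
      fun F => scaleVar q (mapCoeff (scaleVar q⁻¹) F)
    -- `∂_u^{(q^{-2})}` acts on the inner variable `u`, i.e. on coefficients
    letI Du : Polynomial (Polynomial A) → Polynomial (Polynomial A) :=
      mapCoeff (qDerivP (q ^ (-2 : ℤ)))
    tau * qDerivP (q ^ (-2 : ℤ)) (Du (sub tau)) -
        qDerivP (q ^ (-2 : ℤ)) tau * Du (sub tau) = 1 := by
  beta_reduce
  set q' : K := q ^ (-2 : ℤ) with hq'
  set p1 : Polynomial A := Polynomial.C a + Polynomial.C b * Polynomial.X with hp1
  set r1 : Polynomial A := Polynomial.C c + Polynomial.C d * Polynomial.X with hr1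
  -- Step 1: mapCoeff (scaleVar q⁻¹)
  have h1 : mapCoeff (scaleVar q⁻¹) (Polynomial.C p1 + Polynomial.C r1 * Polynomial.X) =
      Polynomial.C (Polynomial.C a + Polynomial.C (q⁻¹ • b) * Polynomial.X) +
      Polynomial.C (Polynomial.C c + Polynomial.C (q⁻¹ • d) * Polynomial.X) * Polynomial.X := by
    rw [mapCoeff_eq _ (scaleVar_zero q⁻¹) _ (lin_natDegree_le _ _), lin_coeff_zero,
      lin_coeff_one, hp1, hr1, scaleVar_eq _ _ (lin_natDegree_le _ _),
      scaleVar_eq _ _ (lin_natDegree_le _ _), lin_coeff_zero, lin_coeff_one,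
      lin_coeff_zero, lin_coeff_one]
  -- Step 2: scaleVar q of that
  have h2 : scaleVar q
      (Polynomial.C (Polynomial.C a + Polynomial.C (q⁻¹ • b) * Polynomial.X) +
       Polynomial.C (Polynomial.C c + Polynomial.C (q⁻¹ • d) * Polynomial.X) * Polynomial.X) =
      Polynomial.C (Polynomial.C a + Polynomial.C (q⁻¹ • b) * Polynomial.X) +
      Polynomial.C (Polynomial.C (q • c) + Polynomial.C d * Polynomial.X) * Polynomial.X := by
    rw [scaleVar_eq _ _ (lin_natDegree_le _ _), lin_coeff_zero, lin_coeff_one]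
    congr 2
    rw [smul_add, Polynomial.smul_C, ← smul_mul_assoc, Polynomial.smul_C, smul_smul,
      mul_inv_cancel₀ hq, one_smul]
  -- Step 3: Du of that
  have h3 : mapCoeff (qDerivP q')
      (Polynomial.C (Polynomial.C a + Polynomial.C (q⁻¹ • b) * Polynomial.X) +
       Polynomial.C (Polynomial.C (q • c) + Polynomial.C d * Polynomial.X) * Polynomial.X) =
      Polynomial.C (Polynomial.C (q⁻¹ • b)) + Polynomial.C (Polynomial.C d) * Polynomial.X := by
    rw [mapCoeff_eq _ (qDerivP_zero q') _ (lin_natDegree_le _ _), lin_coeff_zero,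
      lin_coeff_one, qDerivP_eq _ _ (lin_natDegree_le _ _),
      qDerivP_eq _ _ (lin_natDegree_le _ _), lin_coeff_one, lin_coeff_one]
  -- Step 4: second derivative
  have h4 : qDerivP q'
      (Polynomial.C (Polynomial.C (q⁻¹ • b)) + Polynomial.C (Polynomial.C d) * Polynomial.X) =
      Polynomial.C (Polynomial.C d) := by
    rw [qDerivP_eq _ _ (lin_natDegree_le _ _), lin_coeff_one]
  -- Step 5: x-derivative of tau
  have h5 : qDerivP q' (Polynomial.C p1 + Polynomial.C r1 * Polynomial.X) =
      Polynomial.C r1 := by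
    rw [qDerivP_eq _ _ (lin_natDegree_le _ _), lin_coeff_one]
  -- inner identity in A[u]
  have inner : p1 * Polynomial.C d - r1 * Polynomial.C (q⁻¹ • b) = 1 := by
    rw [hp1, hr1, add_mul, add_mul, mul_assoc, mul_assoc, Polynomial.X_mul, Polynomial.X_mul,
      ← mul_assoc, ← mul_assoc, ← Polynomial.C_mul, ← Polynomial.C_mul, ← Polynomial.C_mul,
      ← Polynomial.C_mul, ← sub_add_sub_comm, ← Polynomial.C_sub, ← sub_mul, ← Polynomial.C_sub]
    have e1 : a * d - c * (q⁻¹ • b) = 1 := by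
      rw [mul_smul_comm, ← hbc, hdet]
    have e2 : b * d - d * (q⁻¹ • b) = 0 := by
      rw [mul_smul_comm, hbd, sub_self]
    rw [e1, e2, Polynomial.C_0, zero_mul, add_zero, Polynomial.C_1]
  rw [h1, h2, h3, h4, h5]
  rw [add_mul, mul_add, mul_assoc, Polynomial.X_mul, ← sub_add_sub_comm, sub_self,
    add_zero, ← Polynomial.C_mul, ← Polynomial.C_mul, ← Polynomial.C_sub, inner, Polynomial.C_1]

end
end
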